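/- If Path(E) is infinite, the filter F_cf of cofinite subsets of Path(E) is a topological filter; consequently (G(E), τ_{F_cf}) is a topological inverse semigroup. -/

import Mathlib

universe u

/-- A directed graph. -/
structure DiGraph : Type (u + 1) where
  V : Type u
  E : Type u
  s : E → V
  r : E → V

namespace DiGraph

variable (G : DiGraph.{u})

/-- A list of edges forms a valid path starting at vertex `v`. -/
def Valid (v : G.V) : List G.E → Prop
  | [] => True
  | e :: l => G.s e = v ∧ Valid (G.r e) l

/-- the endpoint of a list of edges starting at `v`. -/
def dst (v : G.V) : List G.E → G.V
  | [] => v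
  | e :: l => dst (G.r e) l

variable {G}

lemma dst_append (v : G.V) (l₁ l₂ : List G.E) :
    G.dst v (l₁ ++ l₂) = G.dst (G.dst v l₁) l₂ := by
  induction l₁ generalizing v with
  | nil => rfl
  | cons e t ih => simp [dst, ih]

lemma valid_append (v : G.V) (l₁ l₂ : List G.E) :
    G.Valid v (l₁ ++ l₂) ↔ G.Valid v l₁ ∧ G.Valid (G.dst v l₁) l₂ := by
  induction l₁ generalizing v with
  | nil => simp [Valid, dst]
  | cons e t ih => simp [Valid, dst, ih, and_assoc]

variable (G) in
/-- A (finite, directed) path in `G`: a source vertex together with a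
composable list of edges.  Paths of length zero are the vertices. -/
structure GPath : Type u where
  src : G.V
  edges : List G.E
  valid : G.Valid src edges

/-- The range (end vertex) of a path. -/
def GPath.rng (p : G.GPath) : G.V := G.dst p.src p.edges

/-- Concatenation of composable paths. -/
def GPath.comp (p q : G.GPath) (h : p.rng = q.src) : G.GPath :=
  ⟨p.src, p.edges ++ q.edges, by
    rw [valid_append]
    exact ⟨p.valid, by rw [show G.dst p.src p.edges = q.src from h]; exact q.valid⟩⟩

lemma GPath.comp_rng (p q : G.GPath) (h : p.rng = q.src) : (p.comp q h).rng = q.rng := by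
  show G.dst p.src (p.edges ++ q.edges) = _
  rw [dst_append, show G.dst p.src p.edges = q.src from h]; rfl

/-- If `p` is a prefix of the path `q`, the remaining path (so that
`q = p.comp (p.strip q _ _)`). -/
def GPath.strip (p q : G.GPath) (hs : p.src = q.src) (hp : p.edges <+: q.edges) : G.GPath :=
  ⟨p.rng, q.edges.drop p.edges.length, by
    obtain ⟨t, ht⟩ := hp
    have h1 : p.edges ++ q.edges.drop p.edges.length = q.edges := by
      rw [← ht, List.drop_left]
    have h2 : G.Valid p.src (p.edges ++ q.edges.drop p.edges.length) := by
      rw [h1, hs]; exact q.valid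
    exact ((valid_append _ _ _).mp h2).2⟩

lemma GPath.strip_rng (p q : G.GPath) (hs : p.src = q.src) (hp : p.edges <+: q.edges) :
    (p.strip q hs hp).rng = q.rng := by
  show G.dst p.rng (q.edges.drop p.edges.length) = G.dst q.src q.edges
  obtain ⟨t, ht⟩ := hp
  have h1 : p.edges ++ q.edges.drop p.edges.length = q.edges := by
    rw [← ht, List.drop_left]
  conv_rhs => rw [← hs, ← h1]
  rw [dst_append]; rfl

variable (G) in
/-- A nonzero element `a b⁻¹` of the graph inverse semigroup: a pair of
paths with the same range. -/
structure NZ : Type u where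
  a : G.GPath
  b : G.GPath
  h : a.rng = b.rng

/-- The graph inverse semigroup `G(E)` over a directed graph, in normal form:
the elements `a b⁻¹` with `r(a) = r(b)`, together with a zero element. -/
def GIS (G : DiGraph.{u}) : Type u := Option (NZ G)

instance : Zero (GIS G) := ⟨none⟩

open scoped Classical in
/-- The multiplication of the graph inverse semigroup:
`a b⁻¹ · c d⁻¹ = a c₁ d⁻¹` if `c = b c₁`, `a (d b₁)⁻¹` if `b = c b₁`, and `0` otherwise. -/
noncomputable instance : Mul (GIS G) :=
  ⟨fun x y =>
    match x, y with
    | none, _ => none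
    | some _, none => none
    | some ⟨a, b, hab⟩, some ⟨c, d, hcd⟩ =>
      if h : b.src = c.src ∧ b.edges <+: c.edges then
        some ⟨a.comp (b.strip c h.1 h.2) hab, d, by
          exact (GPath.comp_rng _ _ _).trans ((GPath.strip_rng _ _ _ _).trans hcd)⟩
      else if h' : c.src = b.src ∧ c.edges <+: b.edges then
        some ⟨a, d.comp (c.strip b h'.1 h'.2) hcd.symm, by
          exact hab.trans ((GPath.comp_rng _ _ _).trans (GPath.strip_rng _ _ _ _)).symm⟩
      else none⟩

/-- The nonzero element `a b⁻¹` of `G(E)` determined by a pair of paths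
with the same range. -/
def GIS.nz (n : NZ G) : GIS G := some n

/-- The inversion of the graph inverse semigroup: `(u v⁻¹)⁻¹ = v u⁻¹`. -/
def GIS.inv : GIS G → GIS G
  | none => none
  | some ⟨a, b, h⟩ => some ⟨b, a, h.symm⟩

end DiGraph
namespace DiGraph

variable {G : DiGraph.{u}}

/-- membership predicate for the basic neighbourhoods of zero: all of
`a b⁻¹` with `a, b ∈ F`, together with `0`. -/
def inUF (F : Set G.GPath) : GIS G → Prop
  | none => True
  | some n => n.a ∈ F ∧ n.b ∈ F

/-- The basic neighbourhood `U_F(0) = {a b⁻¹ : a, b ∈ F} ∪ {0}` of zero. -/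
def UF (F : Set G.GPath) : Set (GIS G) := {x | inUF F x}

lemma inUF_mono {F₁ F₂ : Set G.GPath} (h : F₁ ⊆ F₂) :
    ∀ x : GIS G, inUF F₁ x → inUF F₂ x := by
  intro x hx
  cases x with
  | none => trivial
  | some n => exact ⟨h hx.1, h hx.2⟩

/-- The topology `τ_𝓕` on `G(E)` determined by a filter `𝓕` on `Path(E)`:
every nonzero element is isolated, and the sets `U_F(0)`, `F ∈ 𝓕`, form a
neighbourhood base at `0`. -/
def tauF (𝓕 : Filter G.GPath) : TopologicalSpace (GIS G) where
  IsOpen U := (0 : GIS G) ∈ U → ∃ F ∈ 𝓕, UF F ⊆ U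
  isOpen_univ := fun _ => ⟨Set.univ, Filter.univ_mem, Set.subset_univ _⟩
  isOpen_inter := fun U V hU hV h0 => by
    obtain ⟨F₁, hF₁, hs₁⟩ := hU h0.1
    obtain ⟨F₂, hF₂, hs₂⟩ := hV h0.2
    exact ⟨F₁ ∩ F₂, Filter.inter_mem hF₁ hF₂, fun x hx =>
      ⟨hs₁ (inUF_mono Set.inter_subset_left x hx),
       hs₂ (inUF_mono Set.inter_subset_right x hx)⟩⟩
  isOpen_sUnion := fun S hS h0 => by
    obtain ⟨U, hU, h0U⟩ := h0
    obtain ⟨F, hF, hs⟩ := hS U hU h0U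
    exact ⟨F, hF, hs.trans (Set.subset_sUnion_of_mem hU)⟩

/-- The prefix partial order on paths: `a ≤ b` iff `b` is a prefix of `a`. -/
def prefLE (a b : G.GPath) : Prop := b.src = a.src ∧ b.edges <+: a.edges

/-- An ideal of `(Path(E), ≤)`: a set `A` with `↓A = A`. -/
def IsIdeal (A : Set G.GPath) : Prop :=
  ∀ a b : G.GPath, prefLE a b → b ∈ A → a ∈ A

/-- A topological filter on `Path(E)`:
(i) for `F ∈ 𝓕` and paths `a, b` with `r(a) = r(b)`, the set
`F \ {bk : k ∈ Path(E), ak ∉ F}` belongs to `𝓕`;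
(ii) `𝓕` contains all cofinite subsets of `Path(E)`;
(iii) `𝓕` has a base consisting of ideals of `(Path(E), ≤)`. -/
def IsTopFilter (𝓕 : Filter G.GPath) : Prop :=
  (∀ F ∈ 𝓕, ∀ a b : G.GPath, a.rng = b.rng →
      F \ {p | ∃ (k : G.GPath) (h1 : b.rng = k.src) (h2 : a.rng = k.src),
        p = b.comp k h1 ∧ a.comp k h2 ∉ F} ∈ 𝓕) ∧
  𝓕 ≤ Filter.cofinite ∧
  (∀ F ∈ 𝓕, ∃ I ∈ 𝓕, I ⊆ F ∧ IsIdeal I)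

variable (G) in
/-- The filter `𝓕_ω` generated by the sets `U_n = {u ∈ Path(E) : |u| > n}`. -/
def Fomega : Filter G.GPath :=
  Filter.generate {S | ∃ n : ℕ, S = {u : G.GPath | n < u.edges.length}}

variable (G) in
/-- `U_n(0) = {u v⁻¹ : min{|u|,|v|} > n} ∪ {0}`. -/
def Un (n : ℕ) : Set (GIS G) := UF {u : G.GPath | n < u.edges.length}

end DiGraph

/-! For a cofinite `F`, the set `{bk : ak ∉ F}` lies in the image of the finite set `Fᶜ` under
"replace the prefix `a` by `b`", and the largest ideal inside `F` (the paths all of whose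
extensions lie in `F`) misses only prefixes of the finitely many paths outside `F`; so the
cofinite filter is topological.

For any topological filter, multiplication is continuous at `(0, 0)` because ideals are closed
under the products they produce, and at `(ab⁻¹, 0)` because, once the finitely many prefixes `c`
of `b` are discarded (the only ones with `ab⁻¹ · cd⁻¹ = a(db₁)⁻¹`), a product
`ab⁻¹ · (bk)d⁻¹ = (ak)d⁻¹` with `bk` in the set of condition (i) has `ak ∈ F`. -/

open Filter Topology

namespace DiGraph

variable {G : DiGraph.{u}}

lemma GPath.injective_src_edges : Function.Injective fun p : G.GPath => (p.src, p.edges) := by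
  rintro ⟨v, l, _⟩ ⟨w, m, _⟩ h
  obtain ⟨rfl, rfl⟩ := Prod.mk.inj h
  rfl

lemma GPath.finite_of_mapsTo {S : Set G.GPath} {T : Set (G.V × List G.E)} (hT : T.Finite)
    (h : Set.MapsTo (fun p : G.GPath => (p.src, p.edges)) S T) : S.Finite :=
  (hT.preimage GPath.injective_src_edges.injOn).subset h

lemma GPath.comp_strip (p q : G.GPath) (hs : p.src = q.src) (hp : p.edges <+: q.edges) :
    p.comp (p.strip q hs hp) rfl = q :=
  GPath.injective_src_edges (Prod.ext hs (List.prefix_iff_eq_append.mp hp))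

lemma GPath.prefLE_comp (p q : G.GPath) (h : p.rng = q.src) : prefLE (p.comp q h) p :=
  ⟨rfl, List.prefix_append _ _⟩

lemma finite_setOf_prefLE (c : G.GPath) : {p | prefLE c p}.Finite :=
  GPath.finite_of_mapsTo (c.edges.inits.finite_toSet.image (c.src, ·))
    fun p ⟨hs, hp⟩ => ⟨p.edges, (List.mem_inits _ _).mpr hp, Prod.ext hs.symm rfl⟩

lemma finite_setOf_comp_of_comp_notMem {F : Set G.GPath} (hF : Fᶜ.Finite) (a b : G.GPath) :
    {p | ∃ (k : G.GPath) (h1 : b.rng = k.src) (h2 : a.rng = k.src),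
      p = b.comp k h1 ∧ a.comp k h2 ∉ F}.Finite := by
  refine GPath.finite_of_mapsTo
    (hF.image fun q => (b.src, b.edges ++ q.edges.drop a.edges.length)) ?_
  rintro p ⟨k, h1, h2, rfl, hk⟩
  refine ⟨a.comp k h2, hk, ?_⟩
  change (b.src, b.edges ++ (a.edges ++ k.edges).drop a.edges.length) =
    (b.src, b.edges ++ k.edges)
  rw [List.drop_left]

lemma IsIdeal.comp_mem {I : Set G.GPath} (hI : IsIdeal I) {p : G.GPath} (hp : p ∈ I)
    (q : G.GPath) (h : p.rng = q.src) : p.comp q h ∈ I :=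
  hI _ p (GPath.prefLE_comp p q h) hp

lemma exists_isIdeal_subset_of_mem_cofinite {F : Set G.GPath} (hF : F ∈ cofinite) :
    ∃ I ∈ cofinite, I ⊆ F ∧ IsIdeal I := by
  refine ⟨{a | ∀ c, prefLE c a → c ∈ F}, ?_, fun a ha => ha a ⟨rfl, List.prefix_rfl⟩,
    fun a b hab hb c hca => hb c ⟨hab.1.trans hca.1, hab.2.trans hca.2⟩⟩
  refine (hF.biUnion fun c _ => finite_setOf_prefLE c).subset ?_
  intro a ha
  simp only [Set.mem_compl_iff, Set.mem_ofPred_eq, not_forall] at ha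
  obtain ⟨c, hca, hc⟩ := ha
  exact Set.mem_biUnion hc hca

theorem cofinite_isTopFilter : IsTopFilter (cofinite : Filter G.GPath) :=
  ⟨fun _ hF a b _ => sdiff_mem hF (finite_setOf_comp_of_comp_notMem hF a b).compl_mem_cofinite,
    le_rfl, fun _ => exists_isIdeal_subset_of_mem_cofinite⟩

@[induction_eliminator]
lemma GIS.induction {motive : GIS G → Prop} (zero : motive 0) (nz : ∀ n, motive (GIS.nz n)) :
    ∀ x, motive x
  | none => zero
  | some n => nz n

lemma GIS.inv_mem_UF {F : Set G.GPath} {x : GIS G} (hx : x ∈ UF F) : GIS.inv x ∈ UF F := by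
  induction x with
  | zero => trivial
  | nz n => exact ⟨hx.2, hx.1⟩

lemma GIS.mul_zero (x : GIS G) : x * 0 = 0 := by
  induction x <;> rfl

open scoped Classical in
lemma nz_mul_nz (a b : G.GPath) (hab : a.rng = b.rng) (c d : G.GPath) (hcd : c.rng = d.rng) :
    GIS.nz ⟨a, b, hab⟩ * GIS.nz ⟨c, d, hcd⟩ =
      if h : b.src = c.src ∧ b.edges <+: c.edges then
        GIS.nz ⟨a.comp (b.strip c h.1 h.2) hab, d,
          (GPath.comp_rng _ _ _).trans ((GPath.strip_rng _ _ _ _).trans hcd)⟩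
      else if h' : c.src = b.src ∧ c.edges <+: b.edges then
        GIS.nz ⟨a, d.comp (c.strip b h'.1 h'.2) hcd.symm,
          hab.trans ((GPath.comp_rng _ _ _).trans (GPath.strip_rng _ _ _ _)).symm⟩
      else 0 :=
  rfl

lemma nz_mul_nz_mem_UF {F : Set G.GPath} (n m : NZ G)
    (h₁ : ∀ k (h : n.b.rng = k.src), m.a = n.b.comp k h →
      n.a.comp k (n.h.trans h) ∈ F ∧ m.b ∈ F)
    (h₂ : ∀ k (h : m.a.rng = k.src), n.b = m.a.comp k h →
      n.a ∈ F ∧ m.b.comp k (m.h.symm.trans h) ∈ F) :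
    GIS.nz n * GIS.nz m ∈ UF F := by
  obtain ⟨a, b, hab⟩ := n
  obtain ⟨c, d, hcd⟩ := m
  rw [nz_mul_nz]
  split_ifs with hbc hcb
  · exact h₁ _ rfl (GPath.comp_strip b c hbc.1 hbc.2).symm
  · exact h₂ _ rfl (GPath.comp_strip c b hcb.1 hcb.2).symm
  · trivial

lemma mul_mem_UF_of_isIdeal {I : Set G.GPath} (hI : IsIdeal I) {x y : GIS G}
    (hx : x ∈ UF I) (hy : y ∈ UF I) : x * y ∈ UF I := by
  induction x with
  | zero => trivial
  | nz n =>
  induction y with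
  | zero => rw [GIS.mul_zero]; trivial
  | nz m =>
  exact nz_mul_nz_mem_UF n m (fun k h _ => ⟨hI.comp_mem hx.1 k _, hy.2⟩)
    fun k h _ => ⟨hx.1, hI.comp_mem hy.2 k _⟩

lemma IsTopFilter.exists_nz_mul_mem_UF {𝓕 : Filter G.GPath} (h𝓕 : IsTopFilter 𝓕) (n : NZ G)
    {F : Set G.GPath} (hF : F ∈ 𝓕) : ∃ F' ∈ 𝓕, ∀ y ∈ UF F', GIS.nz n * y ∈ UF F := by
  refine ⟨_, sdiff_mem (h𝓕.1 F hF n.a n.b n.h)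
    (h𝓕.2.1 (finite_setOf_prefLE n.b).compl_mem_cofinite), fun y hy => ?_⟩
  induction y with
  | zero => rw [GIS.mul_zero]; trivial
  | nz m =>
  obtain ⟨⟨⟨-, hc⟩, hcb⟩, ⟨hd, -⟩, -⟩ := hy
  refine nz_mul_nz_mem_UF n m (fun k h hck => ⟨?_, hd⟩) fun k h hbk => ?_
  · by_contra hak
    exact hc ⟨k, h, _, hck, hak⟩
  · exact (hcb (hbk ▸ GPath.prefLE_comp m.a k h)).elim

lemma IsTopFilter.exists_mul_nz_mem_UF {𝓕 : Filter G.GPath} (h𝓕 : IsTopFilter 𝓕) (m : NZ G)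
    {F : Set G.GPath} (hF : F ∈ 𝓕) : ∃ F' ∈ 𝓕, ∀ x ∈ UF F', x * GIS.nz m ∈ UF F := by
  refine ⟨_, sdiff_mem (h𝓕.1 F hF m.b m.a m.h.symm)
    (h𝓕.2.1 (finite_setOf_prefLE m.a).compl_mem_cofinite), fun x hx => ?_⟩
  induction x with
  | zero => trivial
  | nz n =>
  obtain ⟨⟨⟨ha, -⟩, -⟩, ⟨-, hb⟩, hbc⟩ := hx
  refine nz_mul_nz_mem_UF n m (fun k h hck => ?_) fun k h hbk => ⟨ha, ?_⟩
  · exact (hbc (hck ▸ GPath.prefLE_comp n.b k h)).elim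
  · by_contra hdk
    exact hb ⟨k, h, _, hbk, hdk⟩

section Topology

variable {𝓕 : Filter G.GPath}

lemma isOpen_UF {F : Set G.GPath} (hF : F ∈ 𝓕) : IsOpen[tauF 𝓕] (UF F) :=
  fun _ => ⟨F, hF, subset_rfl⟩

lemma nhds_nz (n : NZ G) : @nhds _ (tauF 𝓕) (GIS.nz n) = pure (GIS.nz n) :=
  let := tauF 𝓕
  (isOpen_singleton_iff_nhds_eq_pure _).mp fun h => (Option.some_ne_none n h.symm).elim

lemma hasBasis_nhds_zero : (@nhds _ (tauF 𝓕) 0).HasBasis (· ∈ 𝓕) UF := by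
  let := tauF 𝓕
  refine ⟨fun t => ⟨fun ht => ?_, fun ⟨F, hF, hFt⟩ => mem_of_superset
    ((isOpen_UF hF).mem_nhds trivial) hFt⟩⟩
  obtain ⟨U, hUt, hU, h0⟩ := mem_nhds_iff.mp ht
  obtain ⟨F, hF, hFU⟩ := hU h0
  exact ⟨F, hF, hFU.trans hUt⟩

theorem t2Space_tauF (h𝓕 : 𝓕 ≤ cofinite) : @T2Space (GIS G) (tauF 𝓕) := by
  let := tauF 𝓕
  have zero_sep (n : NZ G) : Disjoint (𝓝 0) (𝓝 (GIS.nz n)) := by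
    rw [nhds_nz, ← principal_singleton, disjoint_principal_right]
    refine mem_of_superset (hasBasis_nhds_zero.mem_of_mem
      (h𝓕 (Set.finite_singleton n.a).compl_mem_cofinite)) ?_
    rintro _ hz rfl
    exact hz.1 rfl
  refine t2Space_iff_disjoint_nhds.mpr fun x y hxy => ?_
  induction x with
  | zero => induction y with
    | zero => exact (hxy rfl).elim
    | nz m => exact zero_sep m
  | nz n => induction y with
    | zero => exact (zero_sep n).symm
    | nz m =>
    rw [nhds_nz, nhds_nz, disjoint_pure_pure]
    exact hxy

theorem continuous_inv_tauF (𝓕 : Filter G.GPath) :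
    @Continuous _ _ (tauF 𝓕) (tauF 𝓕) GIS.inv := by
  let := tauF 𝓕
  refine continuous_iff_continuousAt.mpr fun x => ?_
  induction x with
  | zero =>
    exact (hasBasis_nhds_zero.tendsto_iff hasBasis_nhds_zero).mpr
      fun F hF => ⟨F, hF, fun _ => GIS.inv_mem_UF⟩
  | nz n =>
    rw [ContinuousAt, nhds_nz]
    exact tendsto_pure_nhds _ _

theorem IsTopFilter.continuous_mul (h𝓕 : IsTopFilter 𝓕) :
    @Continuous _ _ (@instTopologicalSpaceProd _ _ (tauF 𝓕) (tauF 𝓕)) (tauF 𝓕)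
      fun p : GIS G × GIS G => p.1 * p.2 := by
  let := tauF 𝓕
  refine continuous_iff_continuousAt.mpr fun ⟨x, y⟩ => ?_
  rw [ContinuousAt, nhds_prod_eq]
  induction x with
  | zero =>
    refine hasBasis_nhds_zero.tendsto_right_iff.mpr fun F hF => ?_
    induction y with
    | zero =>
      obtain ⟨I, hI, hIF, hideal⟩ := h𝓕.2.2 F hF
      have hI0 : UF I ∈ 𝓝 (0 : GIS G) := hasBasis_nhds_zero.mem_of_mem hI
      exact mem_of_superset (prod_mem_prod hI0 hI0)
        fun p hp => inUF_mono hIF _ (mul_mem_UF_of_isIdeal hideal hp.1 hp.2)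
    | nz m =>
      obtain ⟨F', hF', hmul⟩ := h𝓕.exists_mul_nz_mem_UF m hF
      rw [nhds_nz, prod_pure, eventually_map]
      exact hasBasis_nhds_zero.eventually_iff.mpr ⟨F', hF', hmul⟩
  | nz n =>
    induction y with
    | zero =>
      refine hasBasis_nhds_zero.tendsto_right_iff.mpr fun F hF => ?_
      obtain ⟨F', hF', hmul⟩ := h𝓕.exists_nz_mul_mem_UF n hF
      rw [nhds_nz, pure_prod, eventually_map]
      exact hasBasis_nhds_zero.eventually_iff.mpr ⟨F', hF', hmul⟩
    | nz m =>
      rw [nhds_nz, nhds_nz, prod_pure_pure]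
      exact tendsto_pure_nhds _ _

end Topology

end DiGraph

open DiGraph in
theorem cofinite_topological_general (G : DiGraph.{u}) :
    IsTopFilter (Filter.cofinite : Filter G.GPath) ∧
    @T2Space (GIS G) (tauF (Filter.cofinite : Filter G.GPath)) ∧
    @Continuous (GIS G × GIS G) (GIS G)
      (@instTopologicalSpaceProd _ _ (tauF (Filter.cofinite : Filter G.GPath))
        (tauF (Filter.cofinite : Filter G.GPath)))
      (tauF (Filter.cofinite : Filter G.GPath)) (fun p => p.1 * p.2) ∧
    @Continuous (GIS G) (GIS G) (tauF (Filter.cofinite : Filter G.GPath))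
      (tauF (Filter.cofinite : Filter G.GPath)) GIS.inv :=
  ⟨cofinite_isTopFilter, t2Space_tauF le_rfl, cofinite_isTopFilter.continuous_mul,
    continuous_inv_tauF _⟩

open DiGraph in
/-- If `Path(E)` is infinite, the filter `𝓕_cf` of cofinite subsets of
`Path(E)` is a topological filter; consequently `(G(E), τ_{𝓕_cf})` is a
(Hausdorff) topological inverse semigroup. -/
theorem cofinite_topological (G : DiGraph.{u}) [Infinite G.GPath] :
    IsTopFilter (Filter.cofinite : Filter G.GPath) ∧
    @T2Space (GIS G) (tauF (Filter.cofinite : Filter G.GPath)) ∧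
    @Continuous (GIS G × GIS G) (GIS G)
      (@instTopologicalSpaceProd _ _ (tauF (Filter.cofinite : Filter G.GPath))
        (tauF (Filter.cofinite : Filter G.GPath)))
      (tauF (Filter.cofinite : Filter G.GPath)) (fun p => p.1 * p.2) ∧
    @Continuous (GIS G) (GIS G) (tauF (Filter.cofinite : Filter G.GPath))
      (tauF (Filter.cofinite : Filter G.GPath)) GIS.inv :=
  cofinite_topological_general G
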